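/- arXiv:0809.1264 — 2 statements merged into one kernel-verified Lean document; each statement's English description precedes it below -/
import Mathlib

section
/- Let λ ≥ 2 be an integer and let p be a source with 1/(2^λ − 1) ≤ p(1) < 2^{−(λ−1)}. Then R*_opt(p) ≥ lg((1 − p(1))/(1 − 2^{−λ+1})). -/
/-- A source: a positive, monotonically nonincreasing probability mass function on `Fin n`. -/
def IsSource (n : ℕ) (p : Fin n → ℝ) : Prop :=
  (∀ i, 0 < p i) ∧ (∑ i, p i = 1) ∧ (∀ i j : Fin n, i ≤ j → p j ≤ p i)

/-- A codeword-length vector: positive integer lengths satisfying the Kraft inequality. -/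
def IsCLV (n : ℕ) (l : Fin n → ℤ) : Prop :=
  (∀ i, 1 ≤ l i) ∧ (∑ i, (2:ℝ) ^ (-(l i)) ≤ 1)

/-- Maximum pointwise redundancy `R*(l,p) = max_i (l(i) + lg p(i))`. -/
noncomputable def Rstar (n : ℕ) (l : Fin n → ℤ) (p : Fin n → ℝ) : ℝ :=
  ⨆ i : Fin n, ((l i : ℝ) + Real.logb 2 (p i))

/-- Minimum maximum pointwise redundancy over all codeword-length vectors. -/
noncomputable def RstarOpt (n : ℕ) (p : Fin n → ℝ) : ℝ :=
  sInf {r : ℝ | ∃ l : Fin n → ℤ, IsCLV n l ∧ Rstar n l p = r}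

/-!
If `R = R*(l,p)`, then `p(i) 2^{-R} ≤ 2^{-l(i)}` for every `i`, and summing over
`i ≠ 1` against the Kraft inequality gives `(1 - p(1)) 2^{-R} ≤ 1 - 2^{-l(1)}`. If `l(1) ≤ λ - 1`
this is the claim. If `l(1) ≥ λ`, then `R ≥ λ + lg p(1)`, and `p(1) ≥ 1/(2^λ - 1)` is exactly
what makes `2^λ p(1) ≥ (1 - p(1))/(1 - 2^{-λ+1})`.
-/

open Real

lemma le_Rstar {n : ℕ} (l : Fin n → ℤ) (p : Fin n → ℝ) (i : Fin n) :
    (l i : ℝ) + logb 2 (p i) ≤ Rstar n l p :=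
  le_ciSup (f := fun j => (l j : ℝ) + logb 2 (p j)) (Set.finite_range _).bddAbove i

lemma exists_isCLV (n : ℕ) : ∃ l, IsCLV n l := by
  refine ⟨fun _ => n, fun i => show (1 : ℤ) ≤ n by have := i.pos; omega, ?_⟩
  rw [Finset.sum_const, Finset.card_univ, Fintype.card_fin, nsmul_eq_mul, zpow_neg, zpow_natCast,
    mul_inv_le_iff₀ (by positivity), one_mul]
  exact_mod_cast Nat.lt_two_pow_self.le

lemma le_RstarOpt {n : ℕ} {p : Fin n → ℝ} {a : ℝ} (h : ∀ l, IsCLV n l → a ≤ Rstar n l p) :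
    a ≤ RstarOpt n p := by
  obtain ⟨l, hl⟩ := exists_isCLV n
  refine le_csInf ⟨_, l, hl, rfl⟩ ?_
  rintro _ ⟨l, hl, rfl⟩
  exact h l hl

lemma mul_two_rpow_neg_le_of_add_logb_le {x R : ℝ} {k : ℤ} (hx : 0 < x)
    (h : k + logb 2 x ≤ R) : x * 2 ^ (-R) ≤ (2 : ℝ) ^ (-k) := by
  rw [← rpow_intCast, ← logb_le_iff_le_rpow one_lt_two (by positivity),
    logb_mul hx.ne' (by positivity), logb_rpow two_pos (by norm_num)]
  push_cast
  linarith

lemma logb_div_le_of_mul_two_rpow_neg_le {a b R : ℝ} (ha : 0 < a) (hb : 0 < b)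
    (h : a * 2 ^ (-R) ≤ b) : logb 2 (a / b) ≤ R := by
  rw [logb_le_iff_le_rpow one_lt_two (div_pos ha hb), div_le_iff₀ hb]
  rwa [rpow_neg zero_le_two, mul_inv_le_iff₀ (by positivity), mul_comm] at h

lemma one_sub_mul_two_rpow_neg_Rstar_le {n : ℕ} {l : Fin n → ℤ} {p : Fin n → ℝ}
    (hpos : ∀ i, 0 < p i) (hsum : ∑ i, p i = 1) (hkraft : ∑ i, (2 : ℝ) ^ (-(l i)) ≤ 1)
    (i : Fin n) : (1 - p i) * 2 ^ (-Rstar n l p) ≤ 1 - (2 : ℝ) ^ (-(l i)) := by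
  have hrest : 1 - p i = ∑ j ∈ Finset.univ.erase i, p j := by
    rw [Finset.sum_erase_eq_sub (Finset.mem_univ i), hsum]
  calc (1 - p i) * 2 ^ (-Rstar n l p) = ∑ j ∈ Finset.univ.erase i, p j * 2 ^ (-Rstar n l p) := by
        rw [hrest, Finset.sum_mul]
    _ ≤ ∑ j ∈ Finset.univ.erase i, (2 : ℝ) ^ (-(l j)) :=
        Finset.sum_le_sum fun j _ => mul_two_rpow_neg_le_of_add_logb_le (hpos j) (le_Rstar l p j)
    _ = ∑ j, (2 : ℝ) ^ (-(l j)) - 2 ^ (-(l i)) := Finset.sum_erase_eq_sub (Finset.mem_univ i)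
    _ ≤ 1 - (2 : ℝ) ^ (-(l i)) := by linarith

lemma one_sub_div_le_two_pow_mul {x : ℝ} {lam : ℕ} (hlam : 2 ≤ lam)
    (hx : 1 / ((2 : ℝ) ^ lam - 1) ≤ x) :
    (1 - x) / (1 - (2 : ℝ) ^ (-(lam : ℤ) + 1)) ≤ 2 ^ lam * x := by
  have h4 : (4 : ℝ) ≤ 2 ^ lam := by
    calc (4 : ℝ) = 2 ^ 2 := by norm_num
      _ ≤ 2 ^ lam := pow_le_pow_right₀ one_le_two hlam
  rw [zpow_add₀ two_ne_zero, zpow_neg, zpow_natCast, div_le_iff₀ (by field_simp; linarith)]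
  rw [div_le_iff₀ (by linarith)] at hx
  field_simp
  linarith

lemma logb_one_sub_div_le_Rstar {n lam : ℕ} (hlam : 2 ≤ lam) {p : Fin n → ℝ}
    (hp : IsSource n p) {l : Fin n → ℤ} (hl : IsCLV n l) (i : Fin n)
    (hpi : 1 / ((2 : ℝ) ^ lam - 1) ≤ p i) (hpi1 : p i < 1) :
    logb 2 ((1 - p i) / (1 - (2 : ℝ) ^ (-(lam : ℤ) + 1))) ≤ Rstar n l p := by
  have hc : (2 : ℝ) ^ (-(lam : ℤ) + 1) < 1 := zpow_lt_one_of_neg₀ one_lt_two (by omega)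
  rcases le_or_gt (l i) (lam - 1) with hshort | hlong
  · refine logb_div_le_of_mul_two_rpow_neg_le (by linarith) (by linarith) ?_
    calc (1 - p i) * 2 ^ (-Rstar n l p) ≤ 1 - (2 : ℝ) ^ (-(l i)) :=
          one_sub_mul_two_rpow_neg_Rstar_le hp.1 hp.2.1 hl.2 i
      _ ≤ 1 - (2 : ℝ) ^ (-(lam : ℤ) + 1) := by
          gcongr 1 - ?_
          exact zpow_le_zpow_right₀ one_le_two (by omega)
  · have hlam_le : (lam : ℝ) ≤ l i := by exact_mod_cast (by omega : (lam : ℤ) ≤ l i)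
    calc logb 2 ((1 - p i) / (1 - (2 : ℝ) ^ (-(lam : ℤ) + 1)))
        ≤ logb 2 (2 ^ lam * p i) :=
          logb_le_logb_of_le one_lt_two (div_pos (by linarith) (by linarith))
            (one_sub_div_le_two_pow_mul hlam hpi)
      _ = lam + logb 2 (p i) := by
          rw [logb_mul (by positivity) (hp.1 i).ne', logb_pow, logb_self_eq_one one_lt_two, mul_one]
      _ ≤ l i + logb 2 (p i) := by linarith
      _ ≤ Rstar n l p := le_Rstar l p i

theorem stmt5 (n : ℕ) (hn : 2 ≤ n) (lam : ℕ) (hlam : 2 ≤ lam)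
    (p : Fin n → ℝ) (hp : IsSource n p)
    (h1 : 1 / ((2:ℝ) ^ lam - 1) ≤ p ⟨0, by omega⟩)
    (h2 : p ⟨0, by omega⟩ < (2:ℝ) ^ (-(lam:ℤ) + 1)) :
    Real.logb 2 ((1 - p ⟨0, by omega⟩) / (1 - (2:ℝ) ^ (-(lam:ℤ) + 1))) ≤ RstarOpt n p := by
  have hp1 : p ⟨0, by omega⟩ < 1 := h2.trans (zpow_lt_one_of_neg₀ one_lt_two (by omega))
  exact le_RstarOpt fun l hl => logb_one_sub_div_le_Rstar hlam hp hl _ h1 hp1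
end

section
/- For every source p, every codeword-length vector l ∈ ℒ_n, and all reals 0 < c ≤ d: R̄(l,p) ≤ R^c(l,p) ≤ R^d(l,p) ≤ R*(l,p), where R̄(l,p) = ∑_i p(i)(l(i) + lg p(i)) is the average redundancy, R^d(l,p) = (1/d)·lg ∑_{i=1}^n p(i)^{1+d} 2^{d·l(i)} is the d-th exponential redundancy, and R*(l,p) = max_i (l(i) + lg p(i)). Consequently, taking minima over l ∈ ℒ_n, 0 ≤ R̄_opt(p) ≤ R^d_opt(p) ≤ R*_opt(p) < 1 for every d > 0. -/
/-- Average redundancy `R̄(l,p) = ∑ p(i)(l(i) + lg p(i))`. -/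
noncomputable def Rbar (n : ℕ) (l : Fin n → ℤ) (p : Fin n → ℝ) : ℝ :=
  ∑ i, p i * ((l i : ℝ) + Real.logb 2 (p i))

/-- Minimum average redundancy over all codeword-length vectors. -/
noncomputable def RbarOpt (n : ℕ) (p : Fin n → ℝ) : ℝ :=
  sInf {r : ℝ | ∃ l : Fin n → ℤ, IsCLV n l ∧ Rbar n l p = r}

/-- The d-th exponential redundancy `R^d(l,p) = (1/d) lg ∑ p(i)^{1+d} 2^{d l(i)}`. -/
noncomputable def Rd (n : ℕ) (d : ℝ) (l : Fin n → ℤ) (p : Fin n → ℝ) : ℝ :=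
  (1 / d) * Real.logb 2 (∑ i, p i ^ (1 + d) * (2:ℝ) ^ (d * (l i : ℝ)))

/-- Minimum d-th exponential redundancy over all codeword-length vectors. -/
noncomputable def RdOpt (n : ℕ) (d : ℝ) (p : Fin n → ℝ) : ℝ :=
  sInf {r : ℝ | ∃ l : Fin n → ℤ, IsCLV n l ∧ Rd n d l p = r}

/-!
With `q i = 2 ^ (-l i)` and `a i = p i / q i`, all three redundancies are logarithms of means of
`a` weighted by `p`: `R̄` is `lg` of the geometric mean, `R^d` is `lg` of the power mean of
order `d`, and `R*` is `lg` of the maximum, so the chain is the power-mean inequality.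
`R̄ = ∑ p lg (p / q)` is a relative entropy, nonnegative by Gibbs' inequality because
`∑ q ≤ 1 = ∑ p`. The Shannon code `l i = ⌈-lg p i⌉` satisfies Kraft and has `R* < 1`.
-/

open Finset Real

section WeightedMeans

variable {ι : Type*} [Fintype ι] {b : ℝ} {w a : ι → ℝ}

lemma sum_mul_rpow_pos (hw : ∀ i, 0 ≤ w i) (hw1 : ∑ i, w i = 1) (ha : ∀ i, 0 < a i) (d : ℝ) :
    0 < ∑ i, w i * a i ^ d := by
  obtain ⟨j, -, hj⟩ := exists_ne_zero_of_sum_ne_zero (hw1 ▸ one_ne_zero : ∑ i, w i ≠ 0)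
  exact sum_pos' (fun i _ => mul_nonneg (hw i) (rpow_pos_of_pos (ha i) d).le)
    ⟨j, mem_univ j, mul_pos ((hw j).lt_of_ne' hj) (rpow_pos_of_pos (ha j) d)⟩

lemma sum_mul_logb_le_one_div_mul_logb_sum_mul_rpow (hb : 1 < b) (hw : ∀ i, 0 ≤ w i)
    (hw1 : ∑ i, w i = 1) (ha : ∀ i, 0 < a i) {c : ℝ} (hc : 0 < c) :
    ∑ i, w i * logb b (a i) ≤ 1 / c * logb b (∑ i, w i * a i ^ c) := by
  have hac i : 0 < a i ^ c := rpow_pos_of_pos (ha i) c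
  have hgeom : ∏ i, (a i ^ c) ^ w i ≤ ∑ i, w i * a i ^ c :=
    geom_mean_le_arith_mean_weighted univ w (fun i => a i ^ c) (fun i _ => hw i) hw1
      (fun i _ => (hac i).le)
  have hlog : logb b (∏ i, (a i ^ c) ^ w i) = c * ∑ i, w i * logb b (a i) := by
    rw [logb_prod _ _ fun i _ => (rpow_pos_of_pos (hac i) _).ne', mul_sum]
    refine sum_congr rfl fun i _ => ?_
    rw [logb_rpow_eq_mul_logb_of_pos (hac i), logb_rpow_eq_mul_logb_of_pos (ha i)]
    ring
  have hle := logb_le_logb_of_le hb (prod_pos fun i _ => rpow_pos_of_pos (hac i) _) hgeom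
  rw [hlog] at hle
  calc ∑ i, w i * logb b (a i) = 1 / c * (c * ∑ i, w i * logb b (a i)) := by field_simp
    _ ≤ 1 / c * logb b (∑ i, w i * a i ^ c) := by gcongr

lemma one_div_mul_logb_sum_mul_rpow_mono (hb : 1 < b) (hw : ∀ i, 0 ≤ w i)
    (hw1 : ∑ i, w i = 1) (ha : ∀ i, 0 < a i) {c d : ℝ} (hc : 0 < c) (hcd : c ≤ d) :
    1 / c * logb b (∑ i, w i * a i ^ c) ≤ 1 / d * logb b (∑ i, w i * a i ^ d) := by
  have hSc := sum_mul_rpow_pos hw hw1 ha c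
  have hpow : (∑ i, w i * a i ^ c) ^ (d / c) ≤ ∑ i, w i * a i ^ d := by
    convert rpow_arith_mean_le_arith_mean_rpow univ w (fun i => a i ^ c) (fun i _ => hw i) hw1
      (fun i _ => (rpow_pos_of_pos (ha i) c).le) ((one_le_div hc).mpr hcd) using 3 with i
    rw [← rpow_mul (ha i).le, mul_div_cancel₀ _ hc.ne']
  have hle := logb_le_logb_of_le hb (rpow_pos_of_pos hSc _) hpow
  rw [logb_rpow_eq_mul_logb_of_pos hSc] at hle
  have hd : 0 < d := hc.trans_le hcd
  calc 1 / c * logb b (∑ i, w i * a i ^ c)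
      = 1 / d * (d / c * logb b (∑ i, w i * a i ^ c)) := by field_simp
    _ ≤ 1 / d * logb b (∑ i, w i * a i ^ d) := by gcongr

lemma one_div_mul_logb_sum_mul_rpow_le (hb : 1 < b) (hw : ∀ i, 0 ≤ w i)
    (hw1 : ∑ i, w i = 1) (ha : ∀ i, 0 < a i) {d r : ℝ} (hd : 0 < d)
    (har : ∀ i, logb b (a i) ≤ r) :
    1 / d * logb b (∑ i, w i * a i ^ d) ≤ r := by
  have hsum : ∑ i, w i * a i ^ d ≤ b ^ (d * r) :=
    calc ∑ i, w i * a i ^ d ≤ ∑ i, w i * (b ^ r) ^ d := by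
          gcongr with i
          · exact hw i
          · exact (ha i).le
          · exact (logb_le_iff_le_rpow hb (ha i)).1 (har i)
      _ = b ^ (d * r) := by
          rw [← sum_mul, hw1, one_mul, ← rpow_mul (by linarith), mul_comm]
  have hle := logb_le_logb_of_le hb (sum_mul_rpow_pos hw hw1 ha d) hsum
  rw [logb_rpow (by linarith) hb.ne'] at hle
  calc 1 / d * logb b (∑ i, w i * a i ^ d) ≤ 1 / d * (d * r) := by gcongr
    _ = r := by field_simp

lemma sub_le_mul_log_div {x y : ℝ} (hx : 0 ≤ x) (hy : 0 < y) : x - y ≤ x * log (x / y) := by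
  have hkl : y * InformationTheory.klFun (x / y) = x * log (x / y) + y - x := by
    rw [InformationTheory.klFun_apply]
    field_simp
  linarith [mul_nonneg hy.le (InformationTheory.klFun_nonneg (div_nonneg hx hy.le))]

lemma sum_mul_logb_div_nonneg {q : ι → ℝ} (hb : 1 < b) (hw : ∀ i, 0 ≤ w i)
    (hq : ∀ i, 0 < q i) (hqw : ∑ i, q i ≤ ∑ i, w i) :
    0 ≤ ∑ i, w i * logb b (w i / q i) := by
  have hlog : ∑ i, (w i - q i) ≤ ∑ i, w i * log (w i / q i) :=
    sum_le_sum fun i _ => sub_le_mul_log_div (hw i) (hq i)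
  rw [sum_sub_distrib] at hlog
  simp only [logb, mul_div_assoc', ← sum_div]
  exact div_nonneg (by linarith) (log_pos hb).le

lemma lt_one_of_sum_eq_one [Nontrivial ι] (hw : ∀ i, 0 < w i) (hw1 : ∑ i, w i = 1) (i : ι) :
    w i < 1 := by
  obtain ⟨j, hj⟩ := exists_ne i
  exact hw1 ▸ single_lt_sum hj (mem_univ i) (mem_univ j) (hw j) fun k _ _ => (hw k).le

end WeightedMeans

section ShannonLength

variable {x : ℝ}

lemma one_le_ceil_neg_logb (hx0 : 0 < x) (hx1 : x < 1) : 1 ≤ ⌈-logb 2 x⌉ := by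
  have := Int.ceil_pos.2 (neg_pos.2 (logb_neg one_lt_two hx0 hx1))
  omega

lemma two_zpow_neg_ceil_neg_logb_le (hx : 0 < x) : (2 : ℝ) ^ (-⌈-logb 2 x⌉) ≤ x := by
  rw [← rpow_intCast, ← le_logb_iff_rpow_le one_lt_two hx]
  push_cast
  linarith [Int.le_ceil (-logb 2 x)]

lemma ceil_neg_logb_add_logb_lt_one (x : ℝ) : (⌈-logb 2 x⌉ : ℝ) + logb 2 x < 1 := by
  linarith [Int.ceil_lt_add_one (-logb 2 x)]

end ShannonLength

lemma csInf_image_le_csInf_image {α β : Type*} [ConditionallyCompleteLattice β] {s : Set α}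
    {f g : α → β} (hs : s.Nonempty) (hf : BddBelow (f '' s)) (hfg : ∀ x ∈ s, f x ≤ g x) : sInf (f '' s) ≤ sInf (g '' s) :=
  le_csInf (hs.image g) <| by
    rintro _ ⟨x, hx, rfl⟩
    exact (csInf_le hf (Set.mem_image_of_mem f hx)).trans (hfg x hx)

section Redundancy

variable {n : ℕ} {p : Fin n → ℝ}

lemma intCast_add_logb {x : ℝ} (hx : 0 < x) (m : ℤ) :
    (m : ℝ) + logb 2 x = logb 2 (x / 2 ^ (-m)) := by
  rw [logb_div hx.ne' (zpow_pos two_pos _).ne', ← rpow_intCast,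
    logb_rpow two_pos (by norm_num)]
  push_cast
  ring

lemma Rbar_eq_sum_mul_logb (hp : ∀ i, 0 < p i) (l : Fin n → ℤ) :
    Rbar n l p = ∑ i, p i * logb 2 (p i / 2 ^ (-l i)) :=
  sum_congr rfl fun i _ => by rw [intCast_add_logb (hp i)]

lemma Rd_eq_one_div_mul_logb (hp : ∀ i, 0 < p i) (d : ℝ) (l : Fin n → ℤ) :
    Rd n d l p = 1 / d * logb 2 (∑ i, p i * (p i / 2 ^ (-l i)) ^ d) := by
  unfold Rd
  congr 2
  refine sum_congr rfl fun i _ => ?_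
  rw [zpow_neg, div_inv_eq_mul, ← rpow_intCast, mul_rpow (hp i).le (by positivity),
    ← rpow_mul (by norm_num), rpow_add (hp i), rpow_one, mul_comm (l i : ℝ) d]
  ring

lemma logb_div_le_Rstar (hp : ∀ i, 0 < p i) (l : Fin n → ℤ) (i : Fin n) :
    logb 2 (p i / 2 ^ (-l i)) ≤ Rstar n l p := by
  rw [← intCast_add_logb (hp i)]
  exact le_ciSup (Set.finite_range fun j => (l j : ℝ) + logb 2 (p j)).bddAbove i

lemma Rstar_lt_of_forall_lt [Nonempty (Fin n)] {l : Fin n → ℤ} {r : ℝ}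
    (h : ∀ i, (l i : ℝ) + logb 2 (p i) < r) : Rstar n l p < r := by
  obtain ⟨j, hj⟩ := Finite.exists_max fun i => (l i : ℝ) + logb 2 (p i)
  exact (ciSup_le hj).trans_lt (h j)

theorem Rbar_le_Rd_le_Rd_le_Rstar (hp : ∀ i, 0 < p i) (hsum : ∑ i, p i = 1)
    (l : Fin n → ℤ) {c d : ℝ} (hc : 0 < c) (hcd : c ≤ d) :
    Rbar n l p ≤ Rd n c l p ∧ Rd n c l p ≤ Rd n d l p ∧ Rd n d l p ≤ Rstar n l p := by
  have hp0 i : 0 ≤ p i := (hp i).le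
  have ha i : 0 < p i / 2 ^ (-l i) := div_pos (hp i) (zpow_pos two_pos _)
  rw [Rbar_eq_sum_mul_logb hp, Rd_eq_one_div_mul_logb hp c, Rd_eq_one_div_mul_logb hp d]
  exact ⟨sum_mul_logb_le_one_div_mul_logb_sum_mul_rpow one_lt_two hp0 hsum ha hc,
    one_div_mul_logb_sum_mul_rpow_mono one_lt_two hp0 hsum ha hc hcd,
    one_div_mul_logb_sum_mul_rpow_le one_lt_two hp0 hsum ha (hc.trans_le hcd)
      (logb_div_le_Rstar hp l)⟩

theorem Rbar_nonneg (hp : ∀ i, 0 < p i) (hsum : ∑ i, p i = 1) {l : Fin n → ℤ}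
    (hl : IsCLV n l) : 0 ≤ Rbar n l p := by
  rw [Rbar_eq_sum_mul_logb hp]
  exact sum_mul_logb_div_nonneg one_lt_two (fun i => (hp i).le) (fun i => zpow_pos two_pos _)
    (hl.2.trans hsum.ge)

theorem exists_isCLV_Rstar_lt_one (hn : 2 ≤ n) (hp : ∀ i, 0 < p i) (hsum : ∑ i, p i = 1) :
    ∃ l, IsCLV n l ∧ Rstar n l p < 1 := by
  have : Nontrivial (Fin n) := Fin.nontrivial_iff_two_le.2 hn
  have hp1 := lt_one_of_sum_eq_one hp hsum
  refine ⟨fun i => ⌈-logb 2 (p i)⌉, ⟨fun i => one_le_ceil_neg_logb (hp i) (hp1 i), ?_⟩,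
    Rstar_lt_of_forall_lt fun i => ceil_neg_logb_add_logb_lt_one _⟩
  calc ∑ i, (2 : ℝ) ^ (-⌈-logb 2 (p i)⌉) ≤ ∑ i, p i :=
        sum_le_sum fun i _ => two_zpow_neg_ceil_neg_logb_le (hp i)
    _ = 1 := hsum

lemma RbarOpt_eq_sInf_image : RbarOpt n p = sInf ((Rbar n · p) '' {l | IsCLV n l}) := rfl

lemma RdOpt_eq_sInf_image (d : ℝ) : RdOpt n d p = sInf ((Rd n d · p) '' {l | IsCLV n l}) := rfl

lemma RstarOpt_eq_sInf_image : RstarOpt n p = sInf ((Rstar n · p) '' {l | IsCLV n l}) := rfl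

end Redundancy

theorem stmt19 (n : ℕ) (hn : 2 ≤ n) (p : Fin n → ℝ) (hp : IsSource n p) :
    (∀ l : Fin n → ℤ, IsCLV n l → ∀ c d : ℝ, 0 < c → c ≤ d →
      Rbar n l p ≤ Rd n c l p ∧ Rd n c l p ≤ Rd n d l p ∧ Rd n d l p ≤ Rstar n l p) ∧
    (∀ d : ℝ, 0 < d →
      0 ≤ RbarOpt n p ∧ RbarOpt n p ≤ RdOpt n d p ∧
        RdOpt n d p ≤ RstarOpt n p ∧ RstarOpt n p < 1) := by
  obtain ⟨hpos, hsum, -⟩ := hp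
  have chain (l : Fin n → ℤ) {c d : ℝ} (hc : 0 < c) (hcd : c ≤ d) :=
    Rbar_le_Rd_le_Rd_le_Rstar hpos hsum l hc hcd
  refine ⟨fun l _ c d => chain l, fun d hd => ?_⟩
  obtain ⟨l₀, hl₀, hR₀⟩ := exists_isCLV_Rstar_lt_one hn hpos hsum
  set S := {l : Fin n → ℤ | IsCLV n l}
  have hS : S.Nonempty := ⟨l₀, hl₀⟩
  have hbar : ∀ l ∈ S, 0 ≤ Rbar n l p := fun l hl => Rbar_nonneg hpos hsum hl
  have hbar_d : ∀ l ∈ S, Rbar n l p ≤ Rd n d l p := fun l _ => (chain l hd le_rfl).1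
  have hd_star : ∀ l ∈ S, Rd n d l p ≤ Rstar n l p := fun l _ => (chain l hd le_rfl).2.2
  have hd_nonneg l (hl : l ∈ S) := (hbar l hl).trans (hbar_d l hl)
  have hstar_nonneg l (hl : l ∈ S) := (hd_nonneg l hl).trans (hd_star l hl)
  have hbdd {f : (Fin n → ℤ) → ℝ} (hf : ∀ l ∈ S, 0 ≤ f l) : BddBelow (f '' S) :=
    ⟨0, by rintro _ ⟨l, hl, rfl⟩; exact hf l hl⟩
  rw [RbarOpt_eq_sInf_image, RdOpt_eq_sInf_image, RstarOpt_eq_sInf_image]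
  exact ⟨le_csInf (hS.image _) (by rintro _ ⟨l, hl, rfl⟩; exact hbar l hl),
    csInf_image_le_csInf_image hS (hbdd hbar) hbar_d,
    csInf_image_le_csInf_image hS (hbdd hd_nonneg) hd_star,
    (csInf_le (hbdd hstar_nonneg) (Set.mem_image_of_mem _ hl₀)).trans_lt hR₀⟩
end
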